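/- There exists a constant C > 0 such that for every integer n ≥ 4 one has Δ_{3,3}(n) ≤ C · n^{−4/3}; equivalently, every n-element subset of [0,1]^3 contains 4 points forming a tetrahedron of volume at most C · n^{−4/3}. -/

import Mathlib

/-!
Pigeonholing the `n` points into `(m + 1)³ < n` grid cells, `m ≍ n^{1/3}`, gives two points
`p ≠ q` with `|q - p|_∞ ≤ 1/m`. Let `i` be a largest coordinate of `u = q - p` and project the
other points along `u` onto the plane `x_i = p_i`; the projections lie in a square of side `4`,
and `det (u, x - p, y - p) = u_i · (projection of x - p) × (projection of y - p)`. Sorting the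
projections into `≍ n` direction classes (which coordinate dominates, and the bucket of the
ratio of the smaller to the larger) yields `x ≠ y` whose projections have cross product
`O(1/n)`, so the tetrahedron `p q x y` has volume `O(n^{-1/3} · n^{-1})`.
-/

open scoped RealInnerProductSpace

/-- The Gram matrix of a collection of `k` vectors in `ℝ^d`. -/
noncomputable def gram {d k : ℕ} (v : Fin k → EuclideanSpace ℝ (Fin d)) :
    Matrix (Fin k) (Fin k) ℝ :=
  Matrix.of fun i j => ⟪v i, v j⟫

/-- `vol v` is the `k`-dimensional volume of the parallelepiped spanned by
`v 1, …, v k`, i.e. the square root of the determinant of their Gram matrix.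
For `k = 0` it equals `1`. -/
noncomputable def vol {d k : ℕ} (v : Fin k → EuclideanSpace ℝ (Fin d)) : ℝ :=
  Real.sqrt (gram v).det

/-- The `k`-dimensional volume of the simplex with vertices `p 0, …, p k`. -/
noncomputable def simplexVol {d k : ℕ} (p : Fin (k + 1) → EuclideanSpace ℝ (Fin d)) : ℝ :=
  (Nat.factorial k : ℝ)⁻¹ * vol (fun i : Fin k => p i.succ - p 0)

/-- The minimum, over all `(k+1)`-element subsets of `X`, of the `k`-dimensional
volume of the simplex they span. -/
noncomputable def minSimplexVol (d k : ℕ) (X : Finset (EuclideanSpace ℝ (Fin d))) : ℝ :=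
  sInf { v : ℝ | ∃ p : Fin (k + 1) → EuclideanSpace ℝ (Fin d),
    Function.Injective p ∧ (∀ i, p i ∈ X) ∧ v = simplexVol p }

/-- `Delta k d n` is the supremum, over all `n`-element subsets `X` of the unit cube
`[0,1]^d`, of the minimum `k`-dimensional simplex volume among `(k+1)`-element
subsets of `X`. -/
noncomputable def Delta (k d n : ℕ) : ℝ :=
  sSup { v : ℝ | ∃ X : Finset (EuclideanSpace ℝ (Fin d)), X.card = n ∧
    (∀ x ∈ X, ∀ i, x i ∈ Set.Icc (0 : ℝ) 1) ∧ v = minSimplexVol d k X }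

lemma vol_eq_abs_det {d : ℕ} (v : Fin d → EuclideanSpace ℝ (Fin d)) :
    vol v = |(Matrix.of fun i j => v i j).det| := by
  have hgram : gram v =
      (Matrix.of fun i j => v i j) * (Matrix.of fun i j => v i j).transpose := by
    ext i j
    simp [gram, Matrix.mul_apply, PiLp.inner_apply, mul_comm]
  rw [vol, hgram, Matrix.det_mul, Matrix.det_transpose, Real.sqrt_mul_self_eq_abs]

lemma simplexVol_nonneg {d k : ℕ} (p : Fin (k + 1) → EuclideanSpace ℝ (Fin d)) :
    0 ≤ simplexVol p :=
  mul_nonneg (by positivity) (Real.sqrt_nonneg _)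

lemma simplexVol_le_one {d : ℕ} (p : Fin (d + 1) → EuclideanSpace ℝ (Fin d))
    (hp : ∀ i c, p i c ∈ Set.Icc (0 : ℝ) 1) : simplexVol p ≤ 1 := by
  have hdet := Matrix.det_le (A := Matrix.of fun i j => (p (Fin.succ i) - p 0) j)
    (abv := AbsoluteValue.abs) (x := 1) fun i j =>
      abs_sub_le_of_nonneg_of_le (hp _ j).1 (hp _ j).2 (hp 0 j).1 (hp 0 j).2
  simp only [AbsoluteValue.abs_apply, one_pow, Fintype.card_fin, nsmul_eq_mul, mul_one] at hdet
  rw [simplexVol, vol_eq_abs_det, inv_mul_le_iff₀ (by positivity), mul_one]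
  exact hdet

lemma minSimplexVol_le {d k : ℕ} (X : Finset (EuclideanSpace ℝ (Fin d)))
    (p : Fin (k + 1) → EuclideanSpace ℝ (Fin d)) (hinj : Function.Injective p)
    (hmem : ∀ i, p i ∈ X) : minSimplexVol d k X ≤ simplexVol p :=
  csInf_le ⟨0, by rintro v ⟨q, -, -, rfl⟩; exact simplexVol_nonneg q⟩ ⟨p, hinj, hmem, rfl⟩

lemma abs_sub_lt_inv_of_floor_mul_eq {m : ℕ} (hm : 0 < m) {s t : ℝ}
    (h : ⌊(m : ℝ) * s⌋ = ⌊(m : ℝ) * t⌋) : |s - t| < 1 / m := by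
  have hm' : (0 : ℝ) < m := by exact_mod_cast hm
  have := Int.abs_sub_lt_one_of_floor_eq_floor h
  rw [← mul_sub, abs_mul, abs_of_pos hm'] at this
  rwa [lt_div_iff₀ hm', mul_comm]

lemma floor_mul_mem_Icc (m : ℕ) {s : ℝ} (hs : s ∈ Set.Icc (0 : ℝ) 1) :
    ⌊(m : ℝ) * s⌋ ∈ Finset.Icc (0 : ℤ) m := by
  refine Finset.mem_Icc.2 ⟨Int.floor_nonneg.2 (by nlinarith [hs.1]), ?_⟩
  calc ⌊(m : ℝ) * s⌋ ≤ ⌊(m : ℝ)⌋ := Int.floor_mono (mul_le_of_le_one_right (by positivity) hs.2)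
    _ = m := Int.floor_natCast m

lemma exists_ne_abs_sub_lt_of_pow_lt_card {ι : Type*} [Fintype ι]
    (X : Finset (EuclideanSpace ℝ ι)) (hX : ∀ x ∈ X, ∀ j, x j ∈ Set.Icc (0 : ℝ) 1)
    {m : ℕ} (hm : 0 < m) (hcard : (m + 1) ^ Fintype.card ι < X.card) :
    ∃ p ∈ X, ∃ q ∈ X, p ≠ q ∧ ∀ j, |q j - p j| < 1 / m := by
  classical
  have hcells : (Fintype.piFinset fun _ : ι => Finset.Icc (0 : ℤ) m).card < X.card := by
    simpa [Fintype.card_piFinset] using hcard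
  obtain ⟨p, hp, q, hq, hpq, hcell⟩ := Finset.exists_ne_map_eq_of_card_lt_of_maps_to hcells
    (f := fun x j => ⌊(m : ℝ) * x j⌋)
    fun x hx => Fintype.mem_piFinset.2 fun j => floor_mul_mem_Icc m (hX x hx j)
  exact ⟨p, hp, q, hq, hpq, fun j => abs_sub_lt_inv_of_floor_mul_eq hm (congrFun hcell j).symm⟩

lemma abs_mul_sub_mul_le {a b a' b' R ε : ℝ} (h : |b| ≤ |a|) (h' : |b'| ≤ |a'|)
    (ha : |a| ≤ R) (ha' : |a'| ≤ R) (hε : |b' / a' - b / a| ≤ ε) :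
    |a * b' - a' * b| ≤ R ^ 2 * ε := by
  have hcross : a * b' - a' * b = a * a' * (b' / a' - b / a) := by
    rcases eq_or_ne a 0 with rfl | ha0
    · simp [abs_nonpos_iff.1 (h.trans_eq abs_zero)]
    rcases eq_or_ne a' 0 with rfl | ha0'
    · simp [abs_nonpos_iff.1 (h'.trans_eq abs_zero)]
    field_simp
  have hR : 0 ≤ R := (abs_nonneg a).trans ha
  rw [hcross, abs_mul, abs_mul, sq]
  exact mul_le_mul (mul_le_mul ha ha' (abs_nonneg _) hR) hε (abs_nonneg _) (by positivity)

lemma exists_ne_abs_cross_le {α : Type*} (Y : Finset α) (A B : α → ℝ) {R : ℝ}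
    (hA : ∀ z ∈ Y, |A z| ≤ R) (hB : ∀ z ∈ Y, |B z| ≤ R) {M : ℕ} (hM : 0 < M)
    (hcard : 2 * (M + 1) < Y.card) :
    ∃ x ∈ Y, ∃ y ∈ Y, x ≠ y ∧ |A x * B y - A y * B x| ≤ 2 * R ^ 2 / M := by
  -- the tangent of the angle between `(A z, B z)` and the nearer coordinate axis
  set slope : α → ℝ := fun z => if |B z| ≤ |A z| then B z / A z else A z / B z
  have hslope : ∀ z, |slope z| ≤ 1 := fun z => by
    by_cases hz : |B z| ≤ |A z|
    · simpa [slope, hz, abs_div] using div_le_one_of_le₀ hz (abs_nonneg _)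
    · simpa [slope, hz, abs_div] using div_le_one_of_le₀ (le_of_not_ge hz) (abs_nonneg _)
  have hcells : ((Finset.univ : Finset Bool) ×ˢ Finset.Icc (0 : ℤ) M).card < Y.card := by
    simpa [mul_comm] using hcard
  obtain ⟨x, hx, y, hy, hxy, hcell⟩ := Finset.exists_ne_map_eq_of_card_lt_of_maps_to hcells
    (f := fun z => (decide (|B z| ≤ |A z|), ⌊(M : ℝ) * ((slope z + 1) / 2)⌋))
    fun z _ => Finset.mem_product.2 ⟨Finset.mem_univ _, floor_mul_mem_Icc M
      ⟨by linarith [(abs_le.1 (hslope z)).1], by linarith [(abs_le.1 (hslope z)).2]⟩⟩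
  obtain ⟨hclass, hbucket⟩ := Prod.ext_iff.1 hcell
  have hclose : |slope y - slope x| ≤ 2 / M := by
    have := (abs_sub_lt_inv_of_floor_mul_eq hM hbucket).le
    rw [show (slope x + 1) / 2 - (slope y + 1) / 2 = (slope x - slope y) / 2 by ring,
      abs_div, abs_two] at this
    rw [abs_sub_comm, div_eq_mul_one_div 2]
    linarith
  refine ⟨x, hx, y, hy, hxy, ?_⟩
  rw [show 2 * R ^ 2 / M = R ^ 2 * (2 / M) by ring]
  by_cases hBAx : |B x| ≤ |A x|
  · have hBAy : |B y| ≤ |A y| := by simpa [hBAx] using hclass.symm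
    simp only [slope, if_pos hBAx, if_pos hBAy] at hclose
    exact abs_mul_sub_mul_le hBAx hBAy (hA x hx) (hA y hy) hclose
  · have hBAy : ¬ |B y| ≤ |A y| := by simpa [hBAx] using hclass.symm
    simp only [slope, if_neg hBAx, if_neg hBAy] at hclose
    rw [abs_sub_comm, mul_comm (A y), mul_comm (A x)]
    exact abs_mul_sub_mul_le (le_of_not_ge hBAx) (le_of_not_ge hBAy) (hB x hx) (hB y hy) hclose

/-- The projection of `a` along `u` onto the hyperplane `x i = 0` (just `a` when `u i = 0`). -/
noncomputable def projAlong {ι : Type*} (u : EuclideanSpace ℝ ι) (i : ι)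
    (a : EuclideanSpace ℝ ι) : EuclideanSpace ℝ ι :=
  a - (a i / u i) • u

lemma abs_projAlong_le {ι : Type*} {u a : EuclideanSpace ℝ ι} {i j : ι} (hu : |u j| ≤ |u i|)
    (ha : ∀ c, |a c| ≤ 1) : |projAlong u i a j| ≤ 2 := by
  have hshift : |a i / u i * u j| ≤ 1 := by
    rcases eq_or_ne (u i) 0 with hui | hui
    · simp [hui]
    rw [abs_mul, abs_div, div_mul_eq_mul_div, div_le_one (abs_pos.2 hui)]
    nlinarith [ha i, abs_nonneg (a i), abs_nonneg (u j)]
  simp only [projAlong, PiLp.sub_apply, PiLp.smul_apply, smul_eq_mul]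
  linarith [abs_sub (a j) (a i / u i * u j), ha j]

lemma vol_fin_three_eq (u a b : EuclideanSpace ℝ (Fin 3)) (i : Fin 3) (hu : u i ≠ 0) :
    vol ![u, a, b] = |u i * (projAlong u i a (i + 1) * projAlong u i b (i + 2) -
      projAlong u i b (i + 1) * projAlong u i a (i + 2))| := by
  -- subtracting multiples of the row `u` from the rows `a`, `b` clears their column `i`
  rw [vol_eq_abs_det, Matrix.det_fin_three]
  congr 1
  fin_cases i <;> simp [projAlong] at hu ⊢ <;> field_simp <;> ring

lemma exists_simplexVol_le_of_lt_card (X : Finset (EuclideanSpace ℝ (Fin 3)))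
    (hX : ∀ x ∈ X, ∀ j, x j ∈ Set.Icc (0 : ℝ) 1) {m M : ℕ} (hm : 0 < m) (hM : 0 < M)
    (hmX : (m + 1) ^ 3 < X.card) (hMX : 2 * (M + 1) + 2 < X.card) :
    ∃ P : Fin 4 → EuclideanSpace ℝ (Fin 3), Function.Injective P ∧ (∀ r, P r ∈ X) ∧
      simplexVol P ≤ 4 / (3 * (m * M)) := by
  obtain ⟨p, hp, q, hq, hpq, hpq_close⟩ :=
    exists_ne_abs_sub_lt_of_pow_lt_card X hX hm (by simpa using hmX)
  set u := q - p with hu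
  obtain ⟨i, -, hi⟩ := Finset.exists_max_image Finset.univ (fun j => |u j|) Finset.univ_nonempty
  have hui : u i ≠ 0 := by
    intro h
    refine hpq (PiLp.ext fun j => ?_)
    have := hi j (Finset.mem_univ _)
    rw [h, abs_zero, abs_nonpos_iff, hu, PiLp.sub_apply, sub_eq_zero] at this
    exact this.symm
  set Y := (X.erase p).erase q with hY_def
  have hYX : ∀ z ∈ Y, z ∈ X := fun z hz => Finset.mem_of_mem_erase (Finset.mem_of_mem_erase hz)
  have hY : 2 * (M + 1) < Y.card := by
    rw [hY_def, Finset.card_erase_of_mem (by simp [hpq.symm, hq]), Finset.card_erase_of_mem hp]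
    omega
  have hproj : ∀ z ∈ Y, ∀ j, |projAlong u i (z - p) j| ≤ 2 := fun z hz j =>
    abs_projAlong_le (hi j (Finset.mem_univ _)) fun c => by
      have hzc := hX z (hYX z hz) c
      have hpc := hX p hp c
      simpa using abs_sub_le_of_nonneg_of_le hzc.1 hzc.2 hpc.1 hpc.2
  obtain ⟨x, hx, y, hy, hxy, hcross⟩ := exists_ne_abs_cross_le Y
    (fun z => projAlong u i (z - p) (i + 1)) (fun z => projAlong u i (z - p) (i + 2))
    (fun z hz => hproj z hz _) (fun z hz => hproj z hz _) hM hY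
  obtain ⟨hxq, hxp, -⟩ := by simpa [Y] using hx
  obtain ⟨hyq, hyp, -⟩ := by simpa [Y] using hy
  refine ⟨![p, q, x, y], ?_, ?_, ?_⟩
  · rw [← List.nodup_ofFn]
    simp [hpq, Ne.symm hxp, Ne.symm hyp, Ne.symm hxq, Ne.symm hyq, hxy]
  · intro r
    fin_cases r <;> simp [hp, hq, hYX x hx, hYX y hy]
  · have hsimplex : simplexVol ![p, q, x, y] = 6⁻¹ * vol ![u, x - p, y - p] := by
      have hedges : (fun r : Fin 3 => ![p, q, x, y] r.succ - ![p, q, x, y] 0) =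
          ![u, x - p, y - p] := by
        funext r; fin_cases r <;> rfl
      rw [simplexVol, hedges]
      norm_num [Nat.factorial]
    have hui_le : |u i| ≤ 1 / m := by simpa [hu] using (hpq_close i).le
    rw [hsimplex, vol_fin_three_eq _ _ _ i hui, abs_mul]
    calc 6⁻¹ * (|u i| * _) ≤ 6⁻¹ * (1 / m * (2 * 2 ^ 2 / M)) := by gcongr
      _ = 4 / (3 * (m * M)) := by field_simp; norm_num

lemma exists_pos_succ_cube_lt_le {n : ℕ} (hn : 9 ≤ n) :
    ∃ m : ℕ, 0 < m ∧ (m + 1) ^ 3 < n ∧ n ≤ 27 * m ^ 3 := by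
  have hex : ∃ m : ℕ, n ≤ (m + 2) ^ 3 := ⟨n, by nlinarith [Nat.le_self_pow three_ne_zero (n + 2)]⟩
  set m := Nat.find hex
  have hm : 0 < m := (Nat.find_pos hex).2 (by norm_num; omega)
  refine ⟨m, hm, ?_, ?_⟩
  · have := Nat.find_min hex (show m - 1 < m by omega)
    rwa [show m - 1 + 2 = m + 1 by omega, not_le] at this
  · calc n ≤ (m + 2) ^ 3 := Nat.find_spec hex
      _ ≤ (3 * m) ^ 3 := Nat.pow_le_pow_left (by omega) 3
      _ = 27 * m ^ 3 := by ring

lemma inv_mul_le_rpow_neg_four_thirds {m n : ℝ} (hm : 0 < m) (hn : 0 < n)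
    (hmn : n ≤ 27 * m ^ 3) : (m * n)⁻¹ ≤ 3 * n ^ (-(4 / 3) : ℝ) := by
  have hroot : n ^ (3⁻¹ : ℝ) ≤ 3 * m := by
    rw [Real.rpow_inv_le_iff_of_pos hn.le (by positivity) three_pos]
    norm_cast
    linarith
  have hpow : n ^ (-(4 / 3) : ℝ) = (n ^ (3⁻¹ : ℝ) * n)⁻¹ := by
    rw [show (-(4 / 3) : ℝ) = -(3⁻¹ + 1) by norm_num, Real.rpow_neg hn.le,
      Real.rpow_add hn, Real.rpow_one]
  rw [hpow, ← div_eq_mul_inv, le_div_iff₀ (by positivity), inv_mul_le_iff₀ (by positivity)]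
  nlinarith

lemma exists_simplexVol_le_rpow (X : Finset (EuclideanSpace ℝ (Fin 3)))
    (hX : ∀ x ∈ X, ∀ j, x j ∈ Set.Icc (0 : ℝ) 1) (hcard : 4 ≤ X.card) :
    ∃ P : Fin 4 → EuclideanSpace ℝ (Fin 3), Function.Injective P ∧ (∀ r, P r ∈ X) ∧
      simplexVol P ≤ 33 * (X.card : ℝ) ^ (-(4 / 3) : ℝ) := by
  have hn : (0 : ℝ) < X.card := by exact_mod_cast (show 0 < X.card by omega)
  by_cases hsmall : X.card < 12
  · let P : Fin 4 → EuclideanSpace ℝ (Fin 3) := fun r => X.equivFin.symm (Fin.castLE hcard r)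
    refine ⟨P, Subtype.val_injective.comp (X.equivFin.symm.injective.comp
      (Fin.castLE_injective hcard)), fun r => (X.equivFin.symm _).2, ?_⟩
    have hn12 : (X.card : ℝ) ≤ 11 := by exact_mod_cast (show X.card ≤ 11 by omega)
    calc simplexVol P ≤ 1 := simplexVol_le_one P fun r => hX _ (X.equivFin.symm _).2
      _ ≤ 11 * (1 * X.card : ℝ)⁻¹ := by rw [one_mul, ← div_eq_mul_inv, le_div_iff₀ hn]; linarith
      _ ≤ 11 * (3 * (X.card : ℝ) ^ (-(4 / 3) : ℝ)) := by
          gcongr; exact inv_mul_le_rpow_neg_four_thirds one_pos hn (by linarith)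
      _ = 33 * (X.card : ℝ) ^ (-(4 / 3) : ℝ) := by ring
  · obtain ⟨m, hm, hmX, hXm⟩ := exists_pos_succ_cube_lt_le (n := X.card) (by omega)
    obtain ⟨P, hinj, hmem, hvol⟩ := exists_simplexVol_le_of_lt_card X hX hm
      (M := (X.card - 5) / 2) (by omega) hmX (by omega)
    refine ⟨P, hinj, hmem, ?_⟩
    have hm' : (0 : ℝ) < m := by exact_mod_cast hm
    have hM : (X.card : ℝ) ≤ 4 * ((X.card - 5) / 2 : ℕ) := by
      exact_mod_cast (show X.card ≤ 4 * ((X.card - 5) / 2) by omega)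
    calc simplexVol P ≤ 4 / (3 * (m * ((X.card - 5) / 2 : ℕ))) := hvol
      _ ≤ 4 / (3 * (m * (X.card / 4))) := by gcongr; linarith
      _ ≤ 11 * (m * X.card : ℝ)⁻¹ := by field_simp; linarith
      _ ≤ 11 * (3 * (X.card : ℝ) ^ (-(4 / 3) : ℝ)) := by
          gcongr; exact inv_mul_le_rpow_neg_four_thirds hm' hn (by exact_mod_cast hXm)
      _ = 33 * (X.card : ℝ) ^ (-(4 / 3) : ℝ) := by ring

/-- **Corollary 2 (case d = 3).** There is a constant `C > 0` such that for every
`n ≥ 4` one has `Δ_{3,3}(n) ≤ C · n^(-(4/3))`: every `n`-element subset of `[0,1]^3`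
contains 4 points spanning a simplex of 3-dimensional volume at most `C · n^(-(4/3))`. -/
theorem delta_three_three :
    ∃ C : ℝ, 0 < C ∧ ∀ n : ℕ, 4 ≤ n →
      Delta 3 3 n ≤ C * (n : ℝ) ^ ((-(4/3) : ℝ)) := by
  refine ⟨33, by norm_num, fun n hn => Real.sSup_le ?_ (by positivity)⟩
  rintro _ ⟨X, rfl, hX, rfl⟩
  obtain ⟨P, hinj, hmem, hvol⟩ := exists_simplexVol_le_rpow X hX hn
  exact (minSimplexVol_le X P hinj hmem).trans hvol
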